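/- For every vertex v of the graph A_3, the induced subgraph of A_3 obtained by deleting v is word-representable; consequently, since A_3 itself is not word-representable, A_3 is a minimal non-word-representable graph. -/

import Mathlib

set_option linter.unusedSectionVars false

/-- Two distinct letters `x` and `y` alternate in the word `w` if the subsequence of `w`
formed by all occurrences of `x` and `y` has no two equal consecutive letters. -/
def Alternates {V : Type*} [DecidableEq V] (w : List V) (x y : V) : Prop :=
  (w.filter (fun z => decide (z = x ∨ z = y))).Chain' (· ≠ ·)

def neChainB {V : Type*} [DecidableEq V] : List V → Bool
  | a :: b :: l => decide (a ≠ b) && neChainB (b :: l)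
  | _ => true

lemma neChainB_iff {V : Type*} [DecidableEq V] :
    ∀ l : List V, neChainB l = true ↔ l.Chain' (· ≠ ·)
  | [] => by simp [neChainB, List.Chain']
  | [a] => by simp [neChainB, List.Chain']
  | a :: b :: l => by
    have ih := neChainB_iff (b :: l)
    simp only [List.Chain'] at ih ⊢
    rw [List.isChain_cons_cons, ← ih]
    simp [neChainB]

instance {V : Type*} [DecidableEq V] (w : List V) (x y : V) : Decidable (Alternates w x y) :=
  decidable_of_iff _ ((neChainB_iff _) : _ ↔ Alternates w x y)

/-- A graph `G` is word-representable if there is a word over its vertex set, in which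
every vertex occurs, such that two distinct vertices alternate in the word iff
they are adjacent in `G`. -/
def WordRepresentable {V : Type*} [DecidableEq V] (G : SimpleGraph V) : Prop :=
  ∃ w : List V, (∀ v : V, v ∈ w) ∧
    ∀ x y : V, x ≠ y → (Alternates w x y ↔ G.Adj x y)

/-- The graph `A₃` on vertices `{1,…,7}` (represented by `Fin 7`, with vertex `i`
of the paper corresponding to `i - 1` here): a clique on `{1,2,3,4}` together with the
edges `{1,5},{2,5},{1,6},{3,6},{2,7},{3,7},{5,6},{5,7},{6,7}`. -/
def A3 : SimpleGraph (Fin 7) :=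
  SimpleGraph.fromRel (fun a b => (a, b) ∈
    ([(0,1),(0,2),(0,3),(1,2),(1,3),(2,3),
      (0,4),(1,4),(0,5),(2,5),(1,6),(2,6),(4,5),(4,6),(5,6)] : List (Fin 7 × Fin 7)))

instance A3.adjDecidable : DecidableRel A3.Adj :=
  fun a b => decidable_of_iff _ (SimpleGraph.fromRel_adj _ a b).symm



structure MSt where
  b0 : Bool
  b1 : Bool
  b2 : Bool
  b3 : Bool
  lab : Option (Fin 4)
  lbc : Option (Fin 4)
  lcd : Option (Fin 4)
  lad : Option (Fin 4)
  lac : Option (Fin 4)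
  lbd : Option (Fin 4)
deriving DecidableEq

def MSt.seen (s : MSt) : Fin 4 → Bool := ![s.b0, s.b1, s.b2, s.b3]

def mstep (s : MSt) : Fin 4 → MSt
  | 0 => { s with b0 := true, lab := some 0, lad := some 0, lac := some 0 }
  | 1 => { s with b1 := true, lab := some 1, lbc := some 1, lbd := some 1 }
  | 2 => { s with b2 := true, lbc := some 2, lcd := some 2, lac := some 2 }
  | 3 => { s with b3 := true, lcd := some 3, lad := some 3, lbd := some 3 }

def MAllowed (s : MSt) (i : Fin 4) : Prop :=
  (∀ j, j < i → s.seen j = true) ∧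
  ((i = 0 ∨ i = 1) → s.lab ≠ some i) ∧
  ((i = 1 ∨ i = 2) → s.lbc ≠ some i) ∧
  ((i = 2 ∨ i = 3) → s.lcd ≠ some i) ∧
  ((i = 0 ∨ i = 3) → s.lad ≠ some i)

instance (s : MSt) (i : Fin 4) : Decidable (MAllowed s i) := by
  unfold MAllowed; infer_instance

def MReach : List MSt :=
  [ ⟨false, false, false, false, none, none, none, none, none, none⟩,
    ⟨true, false, false, false, some 0, none, none, some 0, some 0, none⟩,
    ⟨true, true, false, false, some 1, some 1, none, some 0, some 0, some 1⟩,
    ⟨true, true, true, false, some 1, some 2, some 2, some 0, some 2, some 1⟩,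
    ⟨true, true, true, true, some 1, some 2, some 3, some 3, some 2, some 3⟩,
    ⟨true, true, true, true, some 0, some 2, some 3, some 0, some 0, some 3⟩,
    ⟨true, true, true, true, some 1, some 1, some 3, some 0, some 0, some 1⟩,
    ⟨true, true, true, true, some 1, some 2, some 2, some 0, some 2, some 1⟩ ]

lemma seen_mstep_self (s : MSt) (k : Fin 4) : (mstep s k).seen k = true := by
  fin_cases k <;> simp [mstep, MSt.seen]

lemma seen_mstep_ne (s : MSt) (k i : Fin 4) (h : i ≠ k) :
    (mstep s k).seen i = s.seen i := by
  fin_cases k <;> fin_cases i <;> simp_all [mstep, MSt.seen]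

lemma mreach_step : ∀ s ∈ MReach, ∀ i, MAllowed s i → mstep s i ∈ MReach := by decide

lemma mreach_concl : ∀ s ∈ MReach, ∀ i, MAllowed s i →
    ((i = 0 ∨ i = 2) → s.lac ≠ some i) ∧ ((i = 1 ∨ i = 3) → s.lbd ≠ some i) := by decide

section Core

variable {V : Type*} [DecidableEq V] (a b c d : V)

def dec4 : Fin 4 → V := ![a, b, c, d]

variable (hab : a ≠ b) (hac : a ≠ c) (had : a ≠ d) (hbc : b ≠ c) (hbd : b ≠ d) (hcd : c ≠ d)

include hab hac had hbc hbd hcd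

lemma dec4_inj : ∀ i j : Fin 4, dec4 a b c d i = dec4 a b c d j → i = j := by
  intro i j h
  fin_cases i <;> fin_cases j <;> simp_all [dec4]

omit hab hac had hbc hbd hcd

def Alt2 (o : Option (Fin 4)) (i j : Fin 4) (w : List V) : Prop :=
  ((o.map (dec4 a b c d)).toList ++
    w.filter (fun z => decide (z = dec4 a b c d i ∨ z = dec4 a b c d j))).Chain' (· ≠ ·)

def OrdC (s : MSt) (w : List V) : Prop :=
  ∀ i j : Fin 4, i < j → s.seen i = false →
    ∀ p, p <+: w → dec4 a b c d j ∈ p → dec4 a b c d i ∈ p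

lemma alt2_nil (o : Option (Fin 4)) (i j : Fin 4) : Alt2 a b c d o i j [] := by
  unfold Alt2
  cases o <;> simp [List.Chain']

lemma alt2_cons_in {o : Option (Fin 4)} {i j k : Fin 4} {w' : List V}
    (hk : k = i ∨ k = j) (h : Alt2 a b c d o i j (dec4 a b c d k :: w')) :
    o ≠ some k ∧ Alt2 a b c d (some k) i j w' := by
  unfold Alt2 at h ⊢
  rw [List.filter_cons] at h
  have hpred : (decide (dec4 a b c d k = dec4 a b c d i ∨ dec4 a b c d k = dec4 a b c d j)) = true := by
    rcases hk with rfl | rfl <;> simp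
  rw [hpred] at h
  simp only [if_true] at h
  constructor
  · rintro rfl
    simp only [Option.map_some, Option.toList_some, List.singleton_append,
      List.Chain', List.isChain_cons_cons] at h
    exact h.1 rfl
  · simpa [List.Chain'] using h.right_of_append

lemma alt2_cons_out {o : Option (Fin 4)} {i j : Fin 4} {z : V} {w' : List V}
    (h1 : z ≠ dec4 a b c d i) (h2 : z ≠ dec4 a b c d j) :
    Alt2 a b c d o i j (z :: w') ↔ Alt2 a b c d o i j w' := by
  unfold Alt2
  rw [List.filter_cons]
  simp [h1, h2]

lemma alt2_build {o : Option (Fin 4)} {i j k : Fin 4} {w' : List V}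
    (hk : k = i ∨ k = j) (hne : ∀ x, o = some x → dec4 a b c d x ≠ dec4 a b c d k)
    (h : Alt2 a b c d (some k) i j w') :
    Alt2 a b c d o i j (dec4 a b c d k :: w') := by
  unfold Alt2 at h ⊢
  rw [List.filter_cons]
  have hpred : (decide (dec4 a b c d k = dec4 a b c d i ∨ dec4 a b c d k = dec4 a b c d j)) = true := by
    rcases hk with rfl | rfl <;> simp
  rw [hpred]
  simp only [if_true]
  simp only [Option.map_some, Option.toList_some, List.singleton_append] at h
  cases o with
  | none => simpa using h
  | some x =>
    simp only [Option.map_some, Option.toList_some, List.cons_append, List.Chain', List.isChain_cons]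
    constructor
    · intro y hy
      simp at hy
      rw [← hy]
      exact hne x rfl
    · exact h

theorem core_run (hab : a ≠ b) (hac : a ≠ c) (had : a ≠ d)
    (hbc : b ≠ c) (hbd : b ≠ d) (hcd : c ≠ d) :
    ∀ (w : List V) (s : MSt), s ∈ MReach →
    Alt2 a b c d s.lab 0 1 w → Alt2 a b c d s.lbc 1 2 w → Alt2 a b c d s.lcd 2 3 w →
    Alt2 a b c d s.lad 0 3 w → OrdC a b c d s w →
    Alt2 a b c d s.lac 0 2 w ∧ Alt2 a b c d s.lbd 1 3 w := by
  intro w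
  have hinj := dec4_inj a b c d hab hac had hbc hbd hcd
  have hni : ∀ i j : Fin 4, i ≠ j → dec4 a b c d i ≠ dec4 a b c d j :=
    fun i j hij h => absurd (hinj _ _ h) hij
  induction w with
  | nil => intro s _ _ _ _ _ _; exact ⟨alt2_nil a b c d _ _ _, alt2_nil a b c d _ _ _⟩
  | cons z w' ih =>
    intro s hs h01 h12 h23 h03 hord
    have hpre : ∀ p : List V, p <+: w' → (z :: p) <+: (z :: w') := by
      rintro p ⟨t, rfl⟩; exact ⟨t, rfl⟩
    have hseen : ∀ k : Fin 4, z = dec4 a b c d k →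
        ∀ j, j < k → s.seen j = true := by
      rintro k rfl j hj
      by_contra hcon
      have hf : s.seen j = false := by simpa using hcon
      have hmem := hord j k hj hf [dec4 a b c d k] ⟨w', rfl⟩ (by simp)
      simp only [List.mem_singleton] at hmem
      exact absurd (hinj _ _ hmem) (Fin.ne_of_lt hj)
    have hordstep : ∀ k : Fin 4, z = dec4 a b c d k →
        OrdC a b c d (mstep s k) w' := by
      rintro k rfl i j hij hf p hp hjp
      have hik : i ≠ k := by
        rintro rfl
        rw [seen_mstep_self] at hf
        exact absurd hf (by simp)
      have hf' : s.seen i = false := by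
        rw [seen_mstep_ne s k i hik] at hf
        exact hf
      have hmem := hord i j hij hf' (dec4 a b c d k :: p) (hpre p hp)
        (List.mem_cons_of_mem _ hjp)
      rcases List.mem_cons.mp hmem with heq | hm
      · exact absurd (hinj _ _ heq) hik
      · exact hm

    by_cases hz0 : z = dec4 a b c d 0
    · rw [hz0] at h01 h12 h23 h03 ⊢
      obtain ⟨hne01, h01'⟩ := alt2_cons_in a b c d (Or.inl rfl) h01
      obtain ⟨hne03, h03'⟩ := alt2_cons_in a b c d (Or.inl rfl) h03
      have h12' := (alt2_cons_out a b c d (i := 1) (j := 2) (hni 0 1 (by decide)) (hni 0 2 (by decide))).mp h12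
      have h23' := (alt2_cons_out a b c d (i := 2) (j := 3) (hni 0 2 (by decide)) (hni 0 3 (by decide))).mp h23
      have hAl : MAllowed s 0 := by
        refine ⟨hseen 0 hz0, fun _ => hne01, ?_, ?_, fun _ => hne03⟩
        · intro h; exact absurd h (by decide)
        · intro h; exact absurd h (by decide)
      obtain ⟨hA, hB⟩ := ih (mstep s 0) (mreach_step s hs 0 hAl) h01' h12' h23' h03'
        (hordstep 0 hz0)
      constructor
      · refine alt2_build a b c d (Or.inl rfl) ?_ hA
        intro x hx heq
        have hx0 : x = 0 := hinj _ _ heq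
        exact (mreach_concl s hs 0 hAl).1 (Or.inl rfl) (hx0 ▸ hx)
      · exact (alt2_cons_out a b c d (i := 1) (j := 3) (hni 0 1 (by decide)) (hni 0 3 (by decide))).mpr hB
    by_cases hz1 : z = dec4 a b c d 1
    · rw [hz1] at h01 h12 h23 h03 ⊢
      obtain ⟨hne01, h01'⟩ := alt2_cons_in a b c d (Or.inr rfl) h01
      obtain ⟨hne12, h12'⟩ := alt2_cons_in a b c d (Or.inl rfl) h12
      have h23' := (alt2_cons_out a b c d (i := 2) (j := 3) (hni 1 2 (by decide)) (hni 1 3 (by decide))).mp h23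
      have h03' := (alt2_cons_out a b c d (i := 0) (j := 3) (hni 1 0 (by decide)) (hni 1 3 (by decide))).mp h03
      have hAl : MAllowed s 1 := by
        refine ⟨hseen 1 hz1, fun _ => hne01, fun _ => hne12, ?_, ?_⟩
        · intro h; exact absurd h (by decide)
        · intro h; exact absurd h (by decide)
      obtain ⟨hA, hB⟩ := ih (mstep s 1) (mreach_step s hs 1 hAl) h01' h12' h23' h03'
        (hordstep 1 hz1)
      constructor
      · exact (alt2_cons_out a b c d (i := 0) (j := 2) (hni 1 0 (by decide)) (hni 1 2 (by decide))).mpr hA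
      · refine alt2_build a b c d (Or.inl rfl) ?_ hB
        intro x hx heq
        have hxk : x = 1 := hinj _ _ heq
        exact (mreach_concl s hs 1 hAl).2 (Or.inl rfl) (hxk ▸ hx)
    by_cases hz2 : z = dec4 a b c d 2
    · rw [hz2] at h01 h12 h23 h03 ⊢
      obtain ⟨hne12, h12'⟩ := alt2_cons_in a b c d (Or.inr rfl) h12
      obtain ⟨hne23, h23'⟩ := alt2_cons_in a b c d (Or.inl rfl) h23
      have h01' := (alt2_cons_out a b c d (i := 0) (j := 1) (hni 2 0 (by decide)) (hni 2 1 (by decide))).mp h01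
      have h03' := (alt2_cons_out a b c d (i := 0) (j := 3) (hni 2 0 (by decide)) (hni 2 3 (by decide))).mp h03
      have hAl : MAllowed s 2 := by
        refine ⟨hseen 2 hz2, ?_, fun _ => hne12, fun _ => hne23, ?_⟩
        · intro h; exact absurd h (by decide)
        · intro h; exact absurd h (by decide)
      obtain ⟨hA, hB⟩ := ih (mstep s 2) (mreach_step s hs 2 hAl) h01' h12' h23' h03'
        (hordstep 2 hz2)
      constructor
      · refine alt2_build a b c d (Or.inr rfl) ?_ hA
        intro x hx heq
        have hxk : x = 2 := hinj _ _ heq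
        exact (mreach_concl s hs 2 hAl).1 (Or.inr rfl) (hxk ▸ hx)
      · exact (alt2_cons_out a b c d (i := 1) (j := 3) (hni 2 1 (by decide)) (hni 2 3 (by decide))).mpr hB
    by_cases hz3 : z = dec4 a b c d 3
    · rw [hz3] at h01 h12 h23 h03 ⊢
      obtain ⟨hne23, h23'⟩ := alt2_cons_in a b c d (Or.inr rfl) h23
      obtain ⟨hne03, h03'⟩ := alt2_cons_in a b c d (Or.inr rfl) h03
      have h01' := (alt2_cons_out a b c d (i := 0) (j := 1) (hni 3 0 (by decide)) (hni 3 1 (by decide))).mp h01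
      have h12' := (alt2_cons_out a b c d (i := 1) (j := 2) (hni 3 1 (by decide)) (hni 3 2 (by decide))).mp h12
      have hAl : MAllowed s 3 := by
        refine ⟨hseen 3 hz3, ?_, ?_, fun _ => hne23, fun _ => hne03⟩
        · intro h; exact absurd h (by decide)
        · intro h; exact absurd h (by decide)
      obtain ⟨hA, hB⟩ := ih (mstep s 3) (mreach_step s hs 3 hAl) h01' h12' h23' h03'
        (hordstep 3 hz3)
      constructor
      · exact (alt2_cons_out a b c d (i := 0) (j := 2) (hni 3 0 (by decide)) (hni 3 2 (by decide))).mpr hA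
      · refine alt2_build a b c d (Or.inr rfl) ?_ hB
        intro x hx heq
        have hxk : x = 3 := hinj _ _ heq
        exact (mreach_concl s hs 3 hAl).2 (Or.inr rfl) (hxk ▸ hx)
    have hzall : ∀ i : Fin 4, z ≠ dec4 a b c d i := by
      intro i
      fin_cases i <;> assumption
    have hord' : OrdC a b c d s w' := by
      intro i j hij hf p hp hjp
      have hmem := hord i j hij hf (z :: p) (hpre p hp) (List.mem_cons_of_mem _ hjp)
      rcases List.mem_cons.mp hmem with heq | hm
      · exact absurd heq.symm (hzall i)
      · exact hm
    obtain ⟨hA, hB⟩ := ih s hs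
      ((alt2_cons_out a b c d (hzall 0) (hzall 1)).mp h01)
      ((alt2_cons_out a b c d (hzall 1) (hzall 2)).mp h12)
      ((alt2_cons_out a b c d (hzall 2) (hzall 3)).mp h23)
      ((alt2_cons_out a b c d (hzall 0) (hzall 3)).mp h03)
      hord'
    exact ⟨(alt2_cons_out a b c d (hzall 0) (hzall 2)).mpr hA,
           (alt2_cons_out a b c d (hzall 1) (hzall 3)).mpr hB⟩

end Core

lemma mem_prefix_aux {A : Type*} [DecidableEq A] :
    ∀ (p t : List A) (x y : A), y ∈ p →
      (p ++ t).idxOf x < (p ++ t).idxOf y → x ∈ p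
  | [], _, _, _, hy, _ => absurd hy List.not_mem_nil
  | h :: p', t, x, y, hy, hlt => by
    rw [List.cons_append, List.idxOf_cons, List.idxOf_cons] at hlt
    by_cases hx : h = x
    · exact hx ▸ List.mem_cons_self
    · have hbx : (h == x) = false := by simp [hx]
      by_cases hyh : h = y
      · have hby : (h == y) = true := by simp [hyh]
        rw [hbx, hby] at hlt
        simp at hlt
      · have hby : (h == y) = false := by simp [hyh]
        rw [hbx, hby] at hlt
        simp only [cond_false] at hlt
        have hy' : y ∈ p' := by
          rcases List.mem_cons.mp hy with h1 | h1
          · exact absurd h1.symm hyh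
          · exact h1
        exact List.mem_cons_of_mem _ (mem_prefix_aux p' t x y hy' (by omega))

theorem A3_not_rep : ¬ WordRepresentable A3 := by
  rintro ⟨w, hall, hrep⟩
  have hkey : ∀ a b c d : Fin 7,
      w.idxOf a < w.idxOf b → w.idxOf b < w.idxOf c → w.idxOf c < w.idxOf d →
      A3.Adj a b → A3.Adj b c → A3.Adj c d → A3.Adj a d →
      (¬ A3.Adj a c ∨ ¬ A3.Adj b d) → False := by
    intro a b c d o1 o2 o3 e1 e2 e3 e4 hm
    have hfab : a ≠ b := e1.ne
    have hfbc : b ≠ c := e2.ne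
    have hfcd : c ≠ d := e3.ne
    have hfad : a ≠ d := e4.ne
    have hfac : a ≠ c := fun h => by rw [h] at o1; omega
    have hfbd : b ≠ d := fun h => by rw [h] at o2; omega
    have hordc : OrdC a b c d (⟨false, false, false, false, none, none, none, none, none, none⟩ : MSt) w := by
      intro i j hij _ p hp hjp
      obtain ⟨t, rfl⟩ := hp
      refine mem_prefix_aux p t _ _ hjp ?_
      fin_cases i <;> fin_cases j
      · exact absurd hij (by decide)
      · exact o1
      · exact o1.trans o2
      · exact (o1.trans o2).trans o3
      · exact absurd hij (by decide)
      · exact absurd hij (by decide)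
      · exact o2
      · exact o2.trans o3
      · exact absurd hij (by decide)
      · exact absurd hij (by decide)
      · exact absurd hij (by decide)
      · exact o3
      · exact absurd hij (by decide)
      · exact absurd hij (by decide)
      · exact absurd hij (by decide)
      · exact absurd hij (by decide)
    obtain ⟨hAC, hBD⟩ := core_run a b c d hfab hfac hfad hfbc hfbd hfcd w
      (⟨false, false, false, false, none, none, none, none, none, none⟩ : MSt) (by decide)
      ((hrep a b hfab).mpr e1) ((hrep b c hfbc).mpr e2)
      ((hrep c d hfcd).mpr e3) ((hrep a d hfad).mpr e4) hordc
    rcases hm with h | h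
    · exact h ((hrep a c hfac).mp hAC)
    · exact h ((hrep b d hfbd).mp hBD)
  have hfinj : ∀ x y : Fin 7, x ≠ y → w.idxOf x ≠ w.idxOf y :=
    fun x y hxy h => hxy ((List.idxOf_inj (hall x)).mp h)
  rcases Nat.lt_or_ge (w.idxOf 0) (w.idxOf 1) with h01 | hge01
  rcases Nat.lt_or_ge (w.idxOf 0) (w.idxOf 2) with h02 | hge02
  rcases Nat.lt_or_ge (w.idxOf 1) (w.idxOf 2) with h12 | hge12
  rcases Nat.lt_or_ge (w.idxOf 0) (w.idxOf 5) with h05 | hge05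
  rcases Nat.lt_or_ge (w.idxOf 2) (w.idxOf 5) with h25 | hge25
  exact hkey 0 1 2 5 (by omega) (by omega) (by omega) (by decide) (by decide) (by decide) (by decide) (by decide)
  have h52 : w.idxOf (5:Fin 7) < w.idxOf (2:Fin 7) := lt_of_le_of_ne hge25 (hfinj 5 2 (by decide))
  rcases Nat.lt_or_ge (w.idxOf 0) (w.idxOf 3) with h03 | hge03
  rcases Nat.lt_or_ge (w.idxOf 0) (w.idxOf 4) with h04 | hge04
  rcases Nat.lt_or_ge (w.idxOf 1) (w.idxOf 4) with h14 | hge14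
  rcases Nat.lt_or_ge (w.idxOf 1) (w.idxOf 3) with h13 | hge13
  rcases Nat.lt_or_ge (w.idxOf 2) (w.idxOf 3) with h23 | hge23
  exact hkey 0 5 2 3 (by omega) (by omega) (by omega) (by decide) (by decide) (by decide) (by decide) (by decide)
  have h32 : w.idxOf (3:Fin 7) < w.idxOf (2:Fin 7) := lt_of_le_of_ne hge23 (hfinj 3 2 (by decide))
  rcases Nat.lt_or_ge (w.idxOf 0) (w.idxOf 6) with h06 | hge06
  rcases Nat.lt_or_ge (w.idxOf 1) (w.idxOf 6) with h16 | hge16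
  rcases Nat.lt_or_ge (w.idxOf 2) (w.idxOf 6) with h26 | hge26
  exact hkey 1 3 2 6 (by omega) (by omega) (by omega) (by decide) (by decide) (by decide) (by decide) (by decide)
  have h62 : w.idxOf (6:Fin 7) < w.idxOf (2:Fin 7) := lt_of_le_of_ne hge26 (hfinj 6 2 (by decide))
  exact hkey 0 1 6 2 (by omega) (by omega) (by omega) (by decide) (by decide) (by decide) (by decide) (by decide)
  have h61 : w.idxOf (6:Fin 7) < w.idxOf (1:Fin 7) := lt_of_le_of_ne hge16 (hfinj 6 1 (by decide))
  exact hkey 6 1 3 2 (by omega) (by omega) (by omega) (by decide) (by decide) (by decide) (by decide) (by decide)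
  have h60 : w.idxOf (6:Fin 7) < w.idxOf (0:Fin 7) := lt_of_le_of_ne hge06 (hfinj 6 0 (by decide))
  exact hkey 6 1 3 2 (by omega) (by omega) (by omega) (by decide) (by decide) (by decide) (by decide) (by decide)
  have h31 : w.idxOf (3:Fin 7) < w.idxOf (1:Fin 7) := lt_of_le_of_ne hge13 (hfinj 3 1 (by decide))
  exact hkey 0 3 1 4 (by omega) (by omega) (by omega) (by decide) (by decide) (by decide) (by decide) (by decide)
  have h41 : w.idxOf (4:Fin 7) < w.idxOf (1:Fin 7) := lt_of_le_of_ne hge14 (hfinj 4 1 (by decide))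
  exact hkey 0 4 1 2 (by omega) (by omega) (by omega) (by decide) (by decide) (by decide) (by decide) (by decide)
  have h40 : w.idxOf (4:Fin 7) < w.idxOf (0:Fin 7) := lt_of_le_of_ne hge04 (hfinj 4 0 (by decide))
  rcases Nat.lt_or_ge (w.idxOf 1) (w.idxOf 3) with h13 | hge13
  rcases Nat.lt_or_ge (w.idxOf 1) (w.idxOf 6) with h16 | hge16
  exact hkey 4 0 1 6 (by omega) (by omega) (by omega) (by decide) (by decide) (by decide) (by decide) (by decide)
  have h61 : w.idxOf (6:Fin 7) < w.idxOf (1:Fin 7) := lt_of_le_of_ne hge16 (hfinj 6 1 (by decide))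
  rcases Nat.lt_or_ge (w.idxOf 2) (w.idxOf 3) with h23 | hge23
  exact hkey 0 5 2 3 (by omega) (by omega) (by omega) (by decide) (by decide) (by decide) (by decide) (by decide)
  have h32 : w.idxOf (3:Fin 7) < w.idxOf (2:Fin 7) := lt_of_le_of_ne hge23 (hfinj 3 2 (by decide))
  exact hkey 6 1 3 2 (by omega) (by omega) (by omega) (by decide) (by decide) (by decide) (by decide) (by decide)
  have h31 : w.idxOf (3:Fin 7) < w.idxOf (1:Fin 7) := lt_of_le_of_ne hge13 (hfinj 3 1 (by decide))
  exact hkey 4 0 3 1 (by omega) (by omega) (by omega) (by decide) (by decide) (by decide) (by decide) (by decide)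
  have h30 : w.idxOf (3:Fin 7) < w.idxOf (0:Fin 7) := lt_of_le_of_ne hge03 (hfinj 3 0 (by decide))
  exact hkey 3 0 5 2 (by omega) (by omega) (by omega) (by decide) (by decide) (by decide) (by decide) (by decide)
  have h50 : w.idxOf (5:Fin 7) < w.idxOf (0:Fin 7) := lt_of_le_of_ne hge05 (hfinj 5 0 (by decide))
  exact hkey 5 0 1 2 (by omega) (by omega) (by omega) (by decide) (by decide) (by decide) (by decide) (by decide)
  have h21 : w.idxOf (2:Fin 7) < w.idxOf (1:Fin 7) := lt_of_le_of_ne hge12 (hfinj 2 1 (by decide))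
  rcases Nat.lt_or_ge (w.idxOf 0) (w.idxOf 4) with h04 | hge04
  rcases Nat.lt_or_ge (w.idxOf 1) (w.idxOf 4) with h14 | hge14
  exact hkey 0 2 1 4 (by omega) (by omega) (by omega) (by decide) (by decide) (by decide) (by decide) (by decide)
  have h41 : w.idxOf (4:Fin 7) < w.idxOf (1:Fin 7) := lt_of_le_of_ne hge14 (hfinj 4 1 (by decide))
  rcases Nat.lt_or_ge (w.idxOf 0) (w.idxOf 3) with h03 | hge03
  rcases Nat.lt_or_ge (w.idxOf 0) (w.idxOf 5) with h05 | hge05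
  rcases Nat.lt_or_ge (w.idxOf 1) (w.idxOf 3) with h13 | hge13
  exact hkey 0 4 1 3 (by omega) (by omega) (by omega) (by decide) (by decide) (by decide) (by decide) (by decide)
  have h31 : w.idxOf (3:Fin 7) < w.idxOf (1:Fin 7) := lt_of_le_of_ne hge13 (hfinj 3 1 (by decide))
  rcases Nat.lt_or_ge (w.idxOf 2) (w.idxOf 5) with h25 | hge25
  rcases Nat.lt_or_ge (w.idxOf 2) (w.idxOf 3) with h23 | hge23
  rcases Nat.lt_or_ge (w.idxOf 0) (w.idxOf 6) with h06 | hge06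
  rcases Nat.lt_or_ge (w.idxOf 1) (w.idxOf 6) with h16 | hge16
  exact hkey 2 3 1 6 (by omega) (by omega) (by omega) (by decide) (by decide) (by decide) (by decide) (by decide)
  have h61 : w.idxOf (6:Fin 7) < w.idxOf (1:Fin 7) := lt_of_le_of_ne hge16 (hfinj 6 1 (by decide))
  rcases Nat.lt_or_ge (w.idxOf 2) (w.idxOf 6) with h26 | hge26
  exact hkey 0 2 6 1 (by omega) (by omega) (by omega) (by decide) (by decide) (by decide) (by decide) (by decide)
  have h62 : w.idxOf (6:Fin 7) < w.idxOf (2:Fin 7) := lt_of_le_of_ne hge26 (hfinj 6 2 (by decide))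
  exact hkey 6 2 3 1 (by omega) (by omega) (by omega) (by decide) (by decide) (by decide) (by decide) (by decide)
  have h60 : w.idxOf (6:Fin 7) < w.idxOf (0:Fin 7) := lt_of_le_of_ne hge06 (hfinj 6 0 (by decide))
  exact hkey 6 2 3 1 (by omega) (by omega) (by omega) (by decide) (by decide) (by decide) (by decide) (by decide)
  have h32 : w.idxOf (3:Fin 7) < w.idxOf (2:Fin 7) := lt_of_le_of_ne hge23 (hfinj 3 2 (by decide))
  exact hkey 0 3 2 5 (by omega) (by omega) (by omega) (by decide) (by decide) (by decide) (by decide) (by decide)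
  have h52 : w.idxOf (5:Fin 7) < w.idxOf (2:Fin 7) := lt_of_le_of_ne hge25 (hfinj 5 2 (by decide))
  exact hkey 0 5 2 1 (by omega) (by omega) (by omega) (by decide) (by decide) (by decide) (by decide) (by decide)
  have h50 : w.idxOf (5:Fin 7) < w.idxOf (0:Fin 7) := lt_of_le_of_ne hge05 (hfinj 5 0 (by decide))
  rcases Nat.lt_or_ge (w.idxOf 1) (w.idxOf 3) with h13 | hge13
  exact hkey 0 4 1 3 (by omega) (by omega) (by omega) (by decide) (by decide) (by decide) (by decide) (by decide)
  have h31 : w.idxOf (3:Fin 7) < w.idxOf (1:Fin 7) := lt_of_le_of_ne hge13 (hfinj 3 1 (by decide))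
  rcases Nat.lt_or_ge (w.idxOf 1) (w.idxOf 6) with h16 | hge16
  exact hkey 5 0 1 6 (by omega) (by omega) (by omega) (by decide) (by decide) (by decide) (by decide) (by decide)
  have h61 : w.idxOf (6:Fin 7) < w.idxOf (1:Fin 7) := lt_of_le_of_ne hge16 (hfinj 6 1 (by decide))
  rcases Nat.lt_or_ge (w.idxOf 2) (w.idxOf 3) with h23 | hge23
  rcases Nat.lt_or_ge (w.idxOf 2) (w.idxOf 6) with h26 | hge26
  exact hkey 0 2 6 1 (by omega) (by omega) (by omega) (by decide) (by decide) (by decide) (by decide) (by decide)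
  have h62 : w.idxOf (6:Fin 7) < w.idxOf (2:Fin 7) := lt_of_le_of_ne hge26 (hfinj 6 2 (by decide))
  exact hkey 6 2 3 1 (by omega) (by omega) (by omega) (by decide) (by decide) (by decide) (by decide) (by decide)
  have h32 : w.idxOf (3:Fin 7) < w.idxOf (2:Fin 7) := lt_of_le_of_ne hge23 (hfinj 3 2 (by decide))
  exact hkey 5 0 3 2 (by omega) (by omega) (by omega) (by decide) (by decide) (by decide) (by decide) (by decide)
  have h30 : w.idxOf (3:Fin 7) < w.idxOf (0:Fin 7) := lt_of_le_of_ne hge03 (hfinj 3 0 (by decide))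
  exact hkey 3 0 4 1 (by omega) (by omega) (by omega) (by decide) (by decide) (by decide) (by decide) (by decide)
  have h40 : w.idxOf (4:Fin 7) < w.idxOf (0:Fin 7) := lt_of_le_of_ne hge04 (hfinj 4 0 (by decide))
  exact hkey 4 0 2 1 (by omega) (by omega) (by omega) (by decide) (by decide) (by decide) (by decide) (by decide)
  have h20 : w.idxOf (2:Fin 7) < w.idxOf (0:Fin 7) := lt_of_le_of_ne hge02 (hfinj 2 0 (by decide))
  rcases Nat.lt_or_ge (w.idxOf 1) (w.idxOf 6) with h16 | hge16
  exact hkey 2 0 1 6 (by omega) (by omega) (by omega) (by decide) (by decide) (by decide) (by decide) (by decide)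
  have h61 : w.idxOf (6:Fin 7) < w.idxOf (1:Fin 7) := lt_of_le_of_ne hge16 (hfinj 6 1 (by decide))
  rcases Nat.lt_or_ge (w.idxOf 2) (w.idxOf 6) with h26 | hge26
  rcases Nat.lt_or_ge (w.idxOf 1) (w.idxOf 3) with h13 | hge13
  exact hkey 2 6 1 3 (by omega) (by omega) (by omega) (by decide) (by decide) (by decide) (by decide) (by decide)
  have h31 : w.idxOf (3:Fin 7) < w.idxOf (1:Fin 7) := lt_of_le_of_ne hge13 (hfinj 3 1 (by decide))
  rcases Nat.lt_or_ge (w.idxOf 0) (w.idxOf 3) with h03 | hge03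
  rcases Nat.lt_or_ge (w.idxOf 0) (w.idxOf 4) with h04 | hge04
  rcases Nat.lt_or_ge (w.idxOf 1) (w.idxOf 4) with h14 | hge14
  exact hkey 0 3 1 4 (by omega) (by omega) (by omega) (by decide) (by decide) (by decide) (by decide) (by decide)
  have h41 : w.idxOf (4:Fin 7) < w.idxOf (1:Fin 7) := lt_of_le_of_ne hge14 (hfinj 4 1 (by decide))
  exact hkey 2 0 4 1 (by omega) (by omega) (by omega) (by decide) (by decide) (by decide) (by decide) (by decide)
  have h40 : w.idxOf (4:Fin 7) < w.idxOf (0:Fin 7) := lt_of_le_of_ne hge04 (hfinj 4 0 (by decide))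
  exact hkey 4 0 3 1 (by omega) (by omega) (by omega) (by decide) (by decide) (by decide) (by decide) (by decide)
  have h30 : w.idxOf (3:Fin 7) < w.idxOf (0:Fin 7) := lt_of_le_of_ne hge03 (hfinj 3 0 (by decide))
  rcases Nat.lt_or_ge (w.idxOf 2) (w.idxOf 3) with h23 | hge23
  rcases Nat.lt_or_ge (w.idxOf 0) (w.idxOf 5) with h05 | hge05
  exact hkey 2 3 0 5 (by omega) (by omega) (by omega) (by decide) (by decide) (by decide) (by decide) (by decide)
  have h50 : w.idxOf (5:Fin 7) < w.idxOf (0:Fin 7) := lt_of_le_of_ne hge05 (hfinj 5 0 (by decide))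
  rcases Nat.lt_or_ge (w.idxOf 2) (w.idxOf 5) with h25 | hge25
  exact hkey 2 5 0 1 (by omega) (by omega) (by omega) (by decide) (by decide) (by decide) (by decide) (by decide)
  have h52 : w.idxOf (5:Fin 7) < w.idxOf (2:Fin 7) := lt_of_le_of_ne hge25 (hfinj 5 2 (by decide))
  exact hkey 5 2 3 0 (by omega) (by omega) (by omega) (by decide) (by decide) (by decide) (by decide) (by decide)
  have h32 : w.idxOf (3:Fin 7) < w.idxOf (2:Fin 7) := lt_of_le_of_ne hge23 (hfinj 3 2 (by decide))
  exact hkey 3 2 6 1 (by omega) (by omega) (by omega) (by decide) (by decide) (by decide) (by decide) (by decide)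
  have h62 : w.idxOf (6:Fin 7) < w.idxOf (2:Fin 7) := lt_of_le_of_ne hge26 (hfinj 6 2 (by decide))
  exact hkey 6 2 0 1 (by omega) (by omega) (by omega) (by decide) (by decide) (by decide) (by decide) (by decide)
  have h10 : w.idxOf (1:Fin 7) < w.idxOf (0:Fin 7) := lt_of_le_of_ne hge01 (hfinj 1 0 (by decide))
  rcases Nat.lt_or_ge (w.idxOf 0) (w.idxOf 2) with h02 | hge02
  rcases Nat.lt_or_ge (w.idxOf 1) (w.idxOf 6) with h16 | hge16
  rcases Nat.lt_or_ge (w.idxOf 2) (w.idxOf 6) with h26 | hge26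
  exact hkey 1 0 2 6 (by omega) (by omega) (by omega) (by decide) (by decide) (by decide) (by decide) (by decide)
  have h62 : w.idxOf (6:Fin 7) < w.idxOf (2:Fin 7) := lt_of_le_of_ne hge26 (hfinj 6 2 (by decide))
  rcases Nat.lt_or_ge (w.idxOf 1) (w.idxOf 3) with h13 | hge13
  rcases Nat.lt_or_ge (w.idxOf 0) (w.idxOf 3) with h03 | hge03
  rcases Nat.lt_or_ge (w.idxOf 2) (w.idxOf 3) with h23 | hge23
  exact hkey 1 6 2 3 (by omega) (by omega) (by omega) (by decide) (by decide) (by decide) (by decide) (by decide)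
  have h32 : w.idxOf (3:Fin 7) < w.idxOf (2:Fin 7) := lt_of_le_of_ne hge23 (hfinj 3 2 (by decide))
  rcases Nat.lt_or_ge (w.idxOf 0) (w.idxOf 5) with h05 | hge05
  rcases Nat.lt_or_ge (w.idxOf 2) (w.idxOf 5) with h25 | hge25
  exact hkey 0 3 2 5 (by omega) (by omega) (by omega) (by decide) (by decide) (by decide) (by decide) (by decide)
  have h52 : w.idxOf (5:Fin 7) < w.idxOf (2:Fin 7) := lt_of_le_of_ne hge25 (hfinj 5 2 (by decide))
  exact hkey 1 0 5 2 (by omega) (by omega) (by omega) (by decide) (by decide) (by decide) (by decide) (by decide)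
  have h50 : w.idxOf (5:Fin 7) < w.idxOf (0:Fin 7) := lt_of_le_of_ne hge05 (hfinj 5 0 (by decide))
  exact hkey 5 0 3 2 (by omega) (by omega) (by omega) (by decide) (by decide) (by decide) (by decide) (by decide)
  have h30 : w.idxOf (3:Fin 7) < w.idxOf (0:Fin 7) := lt_of_le_of_ne hge03 (hfinj 3 0 (by decide))
  rcases Nat.lt_or_ge (w.idxOf 0) (w.idxOf 4) with h04 | hge04
  exact hkey 1 3 0 4 (by omega) (by omega) (by omega) (by decide) (by decide) (by decide) (by decide) (by decide)
  have h40 : w.idxOf (4:Fin 7) < w.idxOf (0:Fin 7) := lt_of_le_of_ne hge04 (hfinj 4 0 (by decide))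
  rcases Nat.lt_or_ge (w.idxOf 1) (w.idxOf 4) with h14 | hge14
  exact hkey 1 4 0 2 (by omega) (by omega) (by omega) (by decide) (by decide) (by decide) (by decide) (by decide)
  have h41 : w.idxOf (4:Fin 7) < w.idxOf (1:Fin 7) := lt_of_le_of_ne hge14 (hfinj 4 1 (by decide))
  exact hkey 4 1 3 0 (by omega) (by omega) (by omega) (by decide) (by decide) (by decide) (by decide) (by decide)
  have h31 : w.idxOf (3:Fin 7) < w.idxOf (1:Fin 7) := lt_of_le_of_ne hge13 (hfinj 3 1 (by decide))
  exact hkey 3 1 6 2 (by omega) (by omega) (by omega) (by decide) (by decide) (by decide) (by decide) (by decide)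
  have h61 : w.idxOf (6:Fin 7) < w.idxOf (1:Fin 7) := lt_of_le_of_ne hge16 (hfinj 6 1 (by decide))
  exact hkey 6 1 0 2 (by omega) (by omega) (by omega) (by decide) (by decide) (by decide) (by decide) (by decide)
  have h20 : w.idxOf (2:Fin 7) < w.idxOf (0:Fin 7) := lt_of_le_of_ne hge02 (hfinj 2 0 (by decide))
  rcases Nat.lt_or_ge (w.idxOf 1) (w.idxOf 2) with h12 | hge12
  rcases Nat.lt_or_ge (w.idxOf 0) (w.idxOf 4) with h04 | hge04
  exact hkey 1 2 0 4 (by omega) (by omega) (by omega) (by decide) (by decide) (by decide) (by decide) (by decide)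
  have h40 : w.idxOf (4:Fin 7) < w.idxOf (0:Fin 7) := lt_of_le_of_ne hge04 (hfinj 4 0 (by decide))
  rcases Nat.lt_or_ge (w.idxOf 1) (w.idxOf 4) with h14 | hge14
  rcases Nat.lt_or_ge (w.idxOf 0) (w.idxOf 3) with h03 | hge03
  exact hkey 1 4 0 3 (by omega) (by omega) (by omega) (by decide) (by decide) (by decide) (by decide) (by decide)
  have h30 : w.idxOf (3:Fin 7) < w.idxOf (0:Fin 7) := lt_of_le_of_ne hge03 (hfinj 3 0 (by decide))
  rcases Nat.lt_or_ge (w.idxOf 0) (w.idxOf 5) with h05 | hge05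
  rcases Nat.lt_or_ge (w.idxOf 1) (w.idxOf 3) with h13 | hge13
  rcases Nat.lt_or_ge (w.idxOf 1) (w.idxOf 6) with h16 | hge16
  rcases Nat.lt_or_ge (w.idxOf 2) (w.idxOf 3) with h23 | hge23
  exact hkey 2 3 0 5 (by omega) (by omega) (by omega) (by decide) (by decide) (by decide) (by decide) (by decide)
  have h32 : w.idxOf (3:Fin 7) < w.idxOf (2:Fin 7) := lt_of_le_of_ne hge23 (hfinj 3 2 (by decide))
  rcases Nat.lt_or_ge (w.idxOf 2) (w.idxOf 6) with h26 | hge26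
  exact hkey 1 3 2 6 (by omega) (by omega) (by omega) (by decide) (by decide) (by decide) (by decide) (by decide)
  have h62 : w.idxOf (6:Fin 7) < w.idxOf (2:Fin 7) := lt_of_le_of_ne hge26 (hfinj 6 2 (by decide))
  exact hkey 1 6 2 0 (by omega) (by omega) (by omega) (by decide) (by decide) (by decide) (by decide) (by decide)
  have h61 : w.idxOf (6:Fin 7) < w.idxOf (1:Fin 7) := lt_of_le_of_ne hge16 (hfinj 6 1 (by decide))
  exact hkey 6 1 0 5 (by omega) (by omega) (by omega) (by decide) (by decide) (by decide) (by decide) (by decide)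
  have h31 : w.idxOf (3:Fin 7) < w.idxOf (1:Fin 7) := lt_of_le_of_ne hge13 (hfinj 3 1 (by decide))
  exact hkey 3 1 4 0 (by omega) (by omega) (by omega) (by decide) (by decide) (by decide) (by decide) (by decide)
  have h50 : w.idxOf (5:Fin 7) < w.idxOf (0:Fin 7) := lt_of_le_of_ne hge05 (hfinj 5 0 (by decide))
  rcases Nat.lt_or_ge (w.idxOf 1) (w.idxOf 3) with h13 | hge13
  rcases Nat.lt_or_ge (w.idxOf 2) (w.idxOf 5) with h25 | hge25
  exact hkey 1 2 5 0 (by omega) (by omega) (by omega) (by decide) (by decide) (by decide) (by decide) (by decide)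
  have h52 : w.idxOf (5:Fin 7) < w.idxOf (2:Fin 7) := lt_of_le_of_ne hge25 (hfinj 5 2 (by decide))
  rcases Nat.lt_or_ge (w.idxOf 2) (w.idxOf 3) with h23 | hge23
  exact hkey 5 2 3 0 (by omega) (by omega) (by omega) (by decide) (by decide) (by decide) (by decide) (by decide)
  have h32 : w.idxOf (3:Fin 7) < w.idxOf (2:Fin 7) := lt_of_le_of_ne hge23 (hfinj 3 2 (by decide))
  rcases Nat.lt_or_ge (w.idxOf 0) (w.idxOf 6) with h06 | hge06
  exact hkey 1 3 2 6 (by omega) (by omega) (by omega) (by decide) (by decide) (by decide) (by decide) (by decide)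
  have h60 : w.idxOf (6:Fin 7) < w.idxOf (0:Fin 7) := lt_of_le_of_ne hge06 (hfinj 6 0 (by decide))
  rcases Nat.lt_or_ge (w.idxOf 1) (w.idxOf 6) with h16 | hge16
  rcases Nat.lt_or_ge (w.idxOf 2) (w.idxOf 6) with h26 | hge26
  exact hkey 1 3 2 6 (by omega) (by omega) (by omega) (by decide) (by decide) (by decide) (by decide) (by decide)
  have h62 : w.idxOf (6:Fin 7) < w.idxOf (2:Fin 7) := lt_of_le_of_ne hge26 (hfinj 6 2 (by decide))
  exact hkey 1 6 2 0 (by omega) (by omega) (by omega) (by decide) (by decide) (by decide) (by decide) (by decide)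
  have h61 : w.idxOf (6:Fin 7) < w.idxOf (1:Fin 7) := lt_of_le_of_ne hge16 (hfinj 6 1 (by decide))
  exact hkey 6 1 3 2 (by omega) (by omega) (by omega) (by decide) (by decide) (by decide) (by decide) (by decide)
  have h31 : w.idxOf (3:Fin 7) < w.idxOf (1:Fin 7) := lt_of_le_of_ne hge13 (hfinj 3 1 (by decide))
  exact hkey 3 1 4 0 (by omega) (by omega) (by omega) (by decide) (by decide) (by decide) (by decide) (by decide)
  have h41 : w.idxOf (4:Fin 7) < w.idxOf (1:Fin 7) := lt_of_le_of_ne hge14 (hfinj 4 1 (by decide))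
  exact hkey 4 1 2 0 (by omega) (by omega) (by omega) (by decide) (by decide) (by decide) (by decide) (by decide)
  have h21 : w.idxOf (2:Fin 7) < w.idxOf (1:Fin 7) := lt_of_le_of_ne hge12 (hfinj 2 1 (by decide))
  rcases Nat.lt_or_ge (w.idxOf 0) (w.idxOf 5) with h05 | hge05
  exact hkey 2 1 0 5 (by omega) (by omega) (by omega) (by decide) (by decide) (by decide) (by decide) (by decide)
  have h50 : w.idxOf (5:Fin 7) < w.idxOf (0:Fin 7) := lt_of_le_of_ne hge05 (hfinj 5 0 (by decide))
  rcases Nat.lt_or_ge (w.idxOf 2) (w.idxOf 5) with h25 | hge25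
  rcases Nat.lt_or_ge (w.idxOf 0) (w.idxOf 3) with h03 | hge03
  exact hkey 2 5 0 3 (by omega) (by omega) (by omega) (by decide) (by decide) (by decide) (by decide) (by decide)
  have h30 : w.idxOf (3:Fin 7) < w.idxOf (0:Fin 7) := lt_of_le_of_ne hge03 (hfinj 3 0 (by decide))
  rcases Nat.lt_or_ge (w.idxOf 0) (w.idxOf 4) with h04 | hge04
  rcases Nat.lt_or_ge (w.idxOf 1) (w.idxOf 3) with h13 | hge13
  exact hkey 1 3 0 4 (by omega) (by omega) (by omega) (by decide) (by decide) (by decide) (by decide) (by decide)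
  have h31 : w.idxOf (3:Fin 7) < w.idxOf (1:Fin 7) := lt_of_le_of_ne hge13 (hfinj 3 1 (by decide))
  rcases Nat.lt_or_ge (w.idxOf 1) (w.idxOf 6) with h16 | hge16
  rcases Nat.lt_or_ge (w.idxOf 2) (w.idxOf 3) with h23 | hge23
  exact hkey 2 3 1 6 (by omega) (by omega) (by omega) (by decide) (by decide) (by decide) (by decide) (by decide)
  have h32 : w.idxOf (3:Fin 7) < w.idxOf (2:Fin 7) := lt_of_le_of_ne hge23 (hfinj 3 2 (by decide))
  exact hkey 3 2 5 0 (by omega) (by omega) (by omega) (by decide) (by decide) (by decide) (by decide) (by decide)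
  have h61 : w.idxOf (6:Fin 7) < w.idxOf (1:Fin 7) := lt_of_le_of_ne hge16 (hfinj 6 1 (by decide))
  exact hkey 6 1 0 4 (by omega) (by omega) (by omega) (by decide) (by decide) (by decide) (by decide) (by decide)
  have h40 : w.idxOf (4:Fin 7) < w.idxOf (0:Fin 7) := lt_of_le_of_ne hge04 (hfinj 4 0 (by decide))
  rcases Nat.lt_or_ge (w.idxOf 1) (w.idxOf 4) with h14 | hge14
  exact hkey 2 1 4 0 (by omega) (by omega) (by omega) (by decide) (by decide) (by decide) (by decide) (by decide)
  have h41 : w.idxOf (4:Fin 7) < w.idxOf (1:Fin 7) := lt_of_le_of_ne hge14 (hfinj 4 1 (by decide))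
  rcases Nat.lt_or_ge (w.idxOf 1) (w.idxOf 3) with h13 | hge13
  exact hkey 4 1 3 0 (by omega) (by omega) (by omega) (by decide) (by decide) (by decide) (by decide) (by decide)
  have h31 : w.idxOf (3:Fin 7) < w.idxOf (1:Fin 7) := lt_of_le_of_ne hge13 (hfinj 3 1 (by decide))
  rcases Nat.lt_or_ge (w.idxOf 2) (w.idxOf 3) with h23 | hge23
  rcases Nat.lt_or_ge (w.idxOf 0) (w.idxOf 6) with h06 | hge06
  exact hkey 2 3 1 6 (by omega) (by omega) (by omega) (by decide) (by decide) (by decide) (by decide) (by decide)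
  have h60 : w.idxOf (6:Fin 7) < w.idxOf (0:Fin 7) := lt_of_le_of_ne hge06 (hfinj 6 0 (by decide))
  rcases Nat.lt_or_ge (w.idxOf 1) (w.idxOf 6) with h16 | hge16
  exact hkey 2 3 1 6 (by omega) (by omega) (by omega) (by decide) (by decide) (by decide) (by decide) (by decide)
  have h61 : w.idxOf (6:Fin 7) < w.idxOf (1:Fin 7) := lt_of_le_of_ne hge16 (hfinj 6 1 (by decide))
  rcases Nat.lt_or_ge (w.idxOf 2) (w.idxOf 6) with h26 | hge26
  exact hkey 2 6 1 0 (by omega) (by omega) (by omega) (by decide) (by decide) (by decide) (by decide) (by decide)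
  have h62 : w.idxOf (6:Fin 7) < w.idxOf (2:Fin 7) := lt_of_le_of_ne hge26 (hfinj 6 2 (by decide))
  exact hkey 6 2 3 1 (by omega) (by omega) (by omega) (by decide) (by decide) (by decide) (by decide) (by decide)
  have h32 : w.idxOf (3:Fin 7) < w.idxOf (2:Fin 7) := lt_of_le_of_ne hge23 (hfinj 3 2 (by decide))
  exact hkey 3 2 5 0 (by omega) (by omega) (by omega) (by decide) (by decide) (by decide) (by decide) (by decide)
  have h52 : w.idxOf (5:Fin 7) < w.idxOf (2:Fin 7) := lt_of_le_of_ne hge25 (hfinj 5 2 (by decide))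
  exact hkey 5 2 1 0 (by omega) (by omega) (by omega) (by decide) (by decide) (by decide) (by decide) (by decide)

lemma pos0 : WordRepresentable (A3.induce {x | x ≠ (0 : Fin 7)}) := by
  letI : DecidablePred (· ∈ {x : Fin 7 | x ≠ 0}) := fun x => inferInstanceAs (Decidable (x ≠ 0))
  letI : Fintype ↥{x : Fin 7 | x ≠ 0} := Subtype.fintype _
  letI : DecidableRel (A3.induce {x | x ≠ (0 : Fin 7)}).Adj :=
    fun x y => inferInstanceAs (Decidable (A3.Adj x y))
  refine ⟨([⟨1, by decide⟩, ⟨2, by decide⟩, ⟨3, by decide⟩, ⟨4, by decide⟩, ⟨6, by decide⟩, ⟨1, by decide⟩, ⟨5, by decide⟩, ⟨4, by decide⟩, ⟨2, by decide⟩, ⟨6, by decide⟩, ⟨5, by decide⟩] : List ↥{x : Fin 7 | x ≠ 0}), ?_, ?_⟩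
  · simp only [Subtype.forall, Set.mem_setOf_eq]
    decide
  · simp only [Subtype.forall, Set.mem_setOf_eq, SimpleGraph.comap_adj,
      Function.Embedding.coe_subtype]
    decide

lemma pos1 : WordRepresentable (A3.induce {x | x ≠ (1 : Fin 7)}) := by
  letI : DecidablePred (· ∈ {x : Fin 7 | x ≠ 1}) := fun x => inferInstanceAs (Decidable (x ≠ 1))
  letI : Fintype ↥{x : Fin 7 | x ≠ 1} := Subtype.fintype _
  letI : DecidableRel (A3.induce {x | x ≠ (1 : Fin 7)}).Adj :=
    fun x y => inferInstanceAs (Decidable (A3.Adj x y))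
  refine ⟨([⟨0, by decide⟩, ⟨2, by decide⟩, ⟨3, by decide⟩, ⟨4, by decide⟩, ⟨5, by decide⟩, ⟨0, by decide⟩, ⟨6, by decide⟩, ⟨4, by decide⟩, ⟨2, by decide⟩, ⟨5, by decide⟩, ⟨6, by decide⟩] : List ↥{x : Fin 7 | x ≠ 1}), ?_, ?_⟩
  · simp only [Subtype.forall, Set.mem_setOf_eq]
    decide
  · simp only [Subtype.forall, Set.mem_setOf_eq, SimpleGraph.comap_adj,
      Function.Embedding.coe_subtype]
    decide

lemma pos2 : WordRepresentable (A3.induce {x | x ≠ (2 : Fin 7)}) := by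
  letI : DecidablePred (· ∈ {x : Fin 7 | x ≠ 2}) := fun x => inferInstanceAs (Decidable (x ≠ 2))
  letI : Fintype ↥{x : Fin 7 | x ≠ 2} := Subtype.fintype _
  letI : DecidableRel (A3.induce {x | x ≠ (2 : Fin 7)}).Adj :=
    fun x y => inferInstanceAs (Decidable (A3.Adj x y))
  refine ⟨([⟨0, by decide⟩, ⟨1, by decide⟩, ⟨3, by decide⟩, ⟨5, by decide⟩, ⟨4, by decide⟩, ⟨0, by decide⟩, ⟨6, by decide⟩, ⟨5, by decide⟩, ⟨1, by decide⟩, ⟨4, by decide⟩, ⟨6, by decide⟩] : List ↥{x : Fin 7 | x ≠ 2}), ?_, ?_⟩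
  · simp only [Subtype.forall, Set.mem_setOf_eq]
    decide
  · simp only [Subtype.forall, Set.mem_setOf_eq, SimpleGraph.comap_adj,
      Function.Embedding.coe_subtype]
    decide

lemma pos3 : WordRepresentable (A3.induce {x | x ≠ (3 : Fin 7)}) := by
  letI : DecidablePred (· ∈ {x : Fin 7 | x ≠ 3}) := fun x => inferInstanceAs (Decidable (x ≠ 3))
  letI : Fintype ↥{x : Fin 7 | x ≠ 3} := Subtype.fintype _
  letI : DecidableRel (A3.induce {x | x ≠ (3 : Fin 7)}).Adj :=
    fun x y => inferInstanceAs (Decidable (A3.Adj x y))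
  refine ⟨([⟨0, by decide⟩, ⟨1, by decide⟩, ⟨5, by decide⟩, ⟨2, by decide⟩, ⟨4, by decide⟩, ⟨0, by decide⟩, ⟨6, by decide⟩, ⟨5, by decide⟩, ⟨1, by decide⟩, ⟨4, by decide⟩] : List ↥{x : Fin 7 | x ≠ 3}), ?_, ?_⟩
  · simp only [Subtype.forall, Set.mem_setOf_eq]
    decide
  · simp only [Subtype.forall, Set.mem_setOf_eq, SimpleGraph.comap_adj,
      Function.Embedding.coe_subtype]
    decide

lemma pos4 : WordRepresentable (A3.induce {x | x ≠ (4 : Fin 7)}) := by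
  letI : DecidablePred (· ∈ {x : Fin 7 | x ≠ 4}) := fun x => inferInstanceAs (Decidable (x ≠ 4))
  letI : Fintype ↥{x : Fin 7 | x ≠ 4} := Subtype.fintype _
  letI : DecidableRel (A3.induce {x | x ≠ (4 : Fin 7)}).Adj :=
    fun x y => inferInstanceAs (Decidable (A3.Adj x y))
  refine ⟨([⟨0, by decide⟩, ⟨2, by decide⟩, ⟨1, by decide⟩, ⟨3, by decide⟩, ⟨5, by decide⟩, ⟨0, by decide⟩, ⟨6, by decide⟩, ⟨2, by decide⟩, ⟨5, by decide⟩, ⟨1, by decide⟩, ⟨6, by decide⟩] : List ↥{x : Fin 7 | x ≠ 4}), ?_, ?_⟩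
  · simp only [Subtype.forall, Set.mem_setOf_eq]
    decide
  · simp only [Subtype.forall, Set.mem_setOf_eq, SimpleGraph.comap_adj,
      Function.Embedding.coe_subtype]
    decide

lemma pos5 : WordRepresentable (A3.induce {x | x ≠ (5 : Fin 7)}) := by
  letI : DecidablePred (· ∈ {x : Fin 7 | x ≠ 5}) := fun x => inferInstanceAs (Decidable (x ≠ 5))
  letI : Fintype ↥{x : Fin 7 | x ≠ 5} := Subtype.fintype _
  letI : DecidableRel (A3.induce {x | x ≠ (5 : Fin 7)}).Adj :=
    fun x y => inferInstanceAs (Decidable (A3.Adj x y))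
  refine ⟨([⟨0, by decide⟩, ⟨1, by decide⟩, ⟨2, by decide⟩, ⟨3, by decide⟩, ⟨4, by decide⟩, ⟨0, by decide⟩, ⟨6, by decide⟩, ⟨1, by decide⟩, ⟨4, by decide⟩, ⟨2, by decide⟩, ⟨6, by decide⟩] : List ↥{x : Fin 7 | x ≠ 5}), ?_, ?_⟩
  · simp only [Subtype.forall, Set.mem_setOf_eq]
    decide
  · simp only [Subtype.forall, Set.mem_setOf_eq, SimpleGraph.comap_adj,
      Function.Embedding.coe_subtype]
    decide

lemma pos6 : WordRepresentable (A3.induce {x | x ≠ (6 : Fin 7)}) := by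
  letI : DecidablePred (· ∈ {x : Fin 7 | x ≠ 6}) := fun x => inferInstanceAs (Decidable (x ≠ 6))
  letI : Fintype ↥{x : Fin 7 | x ≠ 6} := Subtype.fintype _
  letI : DecidableRel (A3.induce {x | x ≠ (6 : Fin 7)}).Adj :=
    fun x y => inferInstanceAs (Decidable (A3.Adj x y))
  refine ⟨([⟨0, by decide⟩, ⟨1, by decide⟩, ⟨3, by decide⟩, ⟨5, by decide⟩, ⟨2, by decide⟩, ⟨4, by decide⟩, ⟨0, by decide⟩, ⟨5, by decide⟩, ⟨1, by decide⟩, ⟨4, by decide⟩] : List ↥{x : Fin 7 | x ≠ 6}), ?_, ?_⟩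
  · simp only [Subtype.forall, Set.mem_setOf_eq]
    decide
  · simp only [Subtype.forall, Set.mem_setOf_eq, SimpleGraph.comap_adj,
      Function.Embedding.coe_subtype]
    decide

/-- Deleting any vertex of `A₃` yields a word-representable graph; since `A₃` itself is
not word-representable, `A₃` is a minimal non-word-representable graph. -/
theorem stmt8 :
    (∀ v : Fin 7, WordRepresentable (A3.induce {x | x ≠ v})) ∧ ¬ WordRepresentable A3 := by
  refine ⟨?_, A3_not_rep⟩
  intro v
  fin_cases v
  · exact pos0
  · exact pos1
  · exact pos2
  · exact pos3
  · exact pos4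
  · exact pos5
  · exact pos6
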